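/- Let k be a commutative ring with ℚ ⊆ k, U a poset with binary meets, and F a presheaf of k-modules on U. Then the map ι : C'^p_simp(F) → Č'^p(F), ι(φ)^τ = Σ_{s∈S_{p+1}} (−1)^s φ^{(τs)‾}, and the map π : Č'^p(F) → C'^p_simp(F), π(ψ)^σ = ψ^{σ̃}, are well defined (ι(φ) is alternating and π(ψ) is reduced) and are morphisms of complexes, i.e. ι ∘ d_simp = d_Čech ∘ ι and π ∘ d_Čech = d_simp ∘ π; moreover π ∘ ι = id on C'^•_simp(F). -/

import Mathlib

/-!
STATEMENT 18: Let `k` be a commutative ring with `ℚ ⊆ k`, `U` a poset with binary meets, and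
`F` a presheaf of `k`-modules on `U`.  Then the map
`ι : C'^p_simp(F) → Č'^p(F)`, `ι(φ)^τ = ∑_{s ∈ S_{p+1}} (−1)^s φ^{(τs)‾}`, and the map
`π : Č'^p(F) → C'^p_simp(F)`, `π(ψ)^σ = ψ^{σ̃}`, are well defined (`ι(φ)` is alternating and
`π(ψ)` is reduced) and are morphisms of complexes, i.e. `ι ∘ d_simp = d_Čech ∘ ι` and
`π ∘ d_Čech = d_simp ∘ π`; moreover `π ∘ ι = id` on `C'^•_simp(F)`.

A `p`-simplex of `U` is a chain, modelled as a monotone map `Fin (p+1) →o U`; tuples are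
arbitrary maps `Fin (p+1) → U`, `∩τ` is the meet of the entries of `τ`, and `τ‾` is the chain
with `i`-th entry `∩_{j ≥ i} τ_j`.  Both differentials are `∑_i (−1)^i (restriction of the
value at the `i`-th face)`, the `i`-th face of a tuple (or chain) being its precomposition
with `Fin.succAbove i` (this drops the `i`-th entry; in the simplicial case the values at the
faces with `i ≥ 1` are canonically identified with elements over `dσ` via the restriction
maps along the equalities `d(∂_iσ) = dσ`).
-/

namespace Stmt18

universe w u

variable {k : Type w} {U : Type u} [CommRing k] [Algebra ℚ k] [SemilatticeInf U]

/-- A presheaf of `k`-modules on the poset `U`. -/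
structure PreMod (k : Type w) (U : Type u) [CommRing k] [SemilatticeInf U] where
  obj : U → Type w
  [acgObj : ∀ X, AddCommGroup (obj X)]
  [modObj : ∀ X, Module k (obj X)]
  res : ∀ {X Y : U}, X ≤ Y → (obj Y →ₗ[k] obj X)
  res_refl : ∀ X : U, res (le_refl X) = LinearMap.id
  res_trans : ∀ {X Y Z : U} (h₁ : X ≤ Y) (h₂ : Y ≤ Z), res (h₁.trans h₂) = (res h₁).comp (res h₂)

attribute [instance] PreMod.acgObj PreMod.modObj

/-- The meet `∩τ` of all the entries of a tuple. -/
def capT {p : ℕ} (τ : Fin (p + 1) → U) : U :=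
  Finset.univ.inf' Finset.univ_nonempty τ

lemma capT_le {p : ℕ} (τ : Fin (p + 1) → U) (j : Fin (p + 1)) : capT τ ≤ τ j :=
  Finset.inf'_le _ (Finset.mem_univ _)

lemma capT_le_comp {p q : ℕ} (τ : Fin (p + 1) → U) (f : Fin (q + 1) → Fin (p + 1)) :
    capT τ ≤ capT (τ ∘ f) :=
  Finset.le_inf' _ _ fun j _ => capT_le τ (f j)

variable (F : PreMod k U)

/-- The Čech cochains `Č^p(F) = ∏_{τ ∈ U^{p+1}} F(∩τ)`. -/
abbrev CechC (p : ℕ) := ∀ τ : Fin (p + 1) → U, F.obj (capT τ)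

/-- The simplicial cochains `C^p_simp(F) = ∏_{σ ∈ N_p(U)} F(dσ)`. -/
abbrev SimpC (p : ℕ) := ∀ σ : Fin (p + 1) →o U, F.obj (σ 0)

/-- The Čech differential `d_Čech(ψ)^τ = ∑_{i=0}^{p+1} (−1)^i ψ^{∂_iτ}|_{∩τ}`. -/
def dCech (p : ℕ) (ψ : CechC F p) : CechC F (p + 1) := fun τ =>
  ∑ i : Fin (p + 2), ((-1 : ℤ) ^ (i : ℕ)) •
    F.res (capT_le_comp τ i.succAbove) (ψ (τ ∘ i.succAbove))

/-- The `i`-th face of a chain. -/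
def faceC {p : ℕ} (i : Fin (p + 2)) (σ : Fin (p + 2) →o U) : Fin (p + 1) →o U :=
  σ.comp ⟨i.succAbove, (Fin.succAboveOrderEmb i).monotone⟩

/-- The simplicial differential `d_simp(φ)^σ = φ^{∂₀σ}|_{dσ} + ∑_{i=1}^{p+1} (−1)^i φ^{∂_iσ}`
(the values at the faces with `i ≥ 1` being identified with elements over `dσ` by the
restriction maps along the equalities `d(∂_iσ) = dσ`). -/
def dSimp (p : ℕ) (φ : SimpC F p) : SimpC F (p + 1) := fun σ =>
  ∑ i : Fin (p + 2), ((-1 : ℤ) ^ (i : ℕ)) •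
    F.res (σ.monotone (Fin.zero_le _)) (φ (faceC i σ))

lemma capT_perm {p : ℕ} (τ : Fin (p + 1) → U) (s : Equiv.Perm (Fin (p + 1))) :
    capT (τ ∘ s) = capT τ :=
  le_antisymm
    (Finset.le_inf' _ _ fun j _ => by simpa using capT_le (τ ∘ s) (s.symm j))
    (capT_le_comp τ s)

/-- A Čech cochain is alternating if it vanishes on tuples with two equal entries and is
(anti)symmetric under permutations of the entries. -/
def IsAlt {p : ℕ} (ψ : CechC F p) : Prop :=
  (∀ τ : Fin (p + 1) → U, (∃ i j, i ≠ j ∧ τ i = τ j) → ψ τ = 0) ∧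
  (∀ (τ : Fin (p + 1) → U) (s : Equiv.Perm (Fin (p + 1))),
    ψ (τ ∘ s) = (Equiv.Perm.sign s : ℤ) • F.res (le_of_eq (capT_perm τ s)) (ψ τ))

/-- A simplicial cochain is reduced if it vanishes on degenerate chains (in particular all
`0`-cochains are reduced). -/
def IsRed {p : ℕ} (φ : SimpC F p) : Prop :=
  ∀ σ : Fin (p + 1) →o U, (∃ i : Fin p, σ i.castSucc = σ i.succ) → φ σ = 0

/-- The chain `τ‾` associated to a tuple `τ`, with `i`-th entry `∩_{j ≥ i} τ_j`. -/
def tbarF {p : ℕ} (τ : Fin (p + 1) → U) : Fin (p + 1) → U := fun i =>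
  (Finset.univ.filter fun j => i ≤ j).inf' ⟨i, by simp⟩ τ

lemma tbarF_monotone {p : ℕ} (τ : Fin (p + 1) → U) : Monotone (tbarF τ) := by
  intro i i' h
  exact Finset.inf'_mono _ (fun j hj => by
    simp only [Finset.mem_filter, Finset.mem_univ, true_and] at hj ⊢
    exact h.trans hj) _

/-- The chain `τ‾` as a monotone map. -/
def tbar {p : ℕ} (τ : Fin (p + 1) → U) : Fin (p + 1) →o U :=
  ⟨tbarF τ, tbarF_monotone τ⟩

lemma capT_le_tbar_zero {p : ℕ} (τ : Fin (p + 1) → U) : capT τ ≤ tbar τ 0 := by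
  show capT τ ≤ tbarF τ 0
  unfold tbarF
  exact Finset.le_inf' _ τ fun j _ => capT_le τ j

lemma le_capT_coe {p : ℕ} (σ : Fin (p + 1) →o U) : σ 0 ≤ capT ⇑σ :=
  Finset.le_inf' _ _ fun j _ => σ.monotone (Fin.zero_le j)

/-- `ι(φ)^τ = ∑_{s ∈ S_{p+1}} (−1)^s φ^{(τs)‾}`. -/
def iota (p : ℕ) (φ : SimpC F p) : CechC F p := fun τ =>
  ∑ s : Equiv.Perm (Fin (p + 1)), (Equiv.Perm.sign s : ℤ) •
    F.res (capT_le_tbar_zero (τ ∘ s) |>.trans' (le_of_eq (capT_perm τ s).symm))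
      (φ (tbar (τ ∘ s)))

/-- `π(ψ)^σ = ψ^{σ̃}`. -/
def pi (p : ℕ) (ψ : CechC F p) : SimpC F p := fun σ =>
  F.res (le_capT_coe σ) (ψ ⇑σ)

/-
`π ∘ ι = id` because `(σs)‾` is degenerate for every permutation `s ≠ 1`. In `ι(d_simp φ)^τ` the
terms of the faces `∂ᵢ` with `i ≥ 1` cancel in pairs under `s ↦ s · (i-1 i)`, which does not
change `∂ᵢ(τs)‾`, while `∂₀(τs)‾ = (τ ∘ s ∘ succ)‾`. Writing `s = insertPerm i t`, i.e. `s 0 = i`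
and `s ∘ succ = succAbove i ∘ t`, so that `sign s = (-1)^i sign t`, matches these remaining terms
with those of `d_Čech ι(φ)^τ`.
-/

open Equiv

section Permutations

variable {n : ℕ}

lemma _root_.Equiv.Perm.exists_apply_succ_le_of_ne_one {s : Perm (Fin (n + 1))} (hs : s ≠ 1) :
    ∃ i : Fin n, s i.succ ≤ s i.castSucc := by
  have : ¬ StrictMono s := fun h => hs (Equiv.ext fun x => h.apply_eq)
  simpa [Fin.strictMono_iff_lt_succ] using this

lemma comp_swap_of_apply_eq {α β : Type*} [DecidableEq α] {τ : α → β} {i j : α}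
    (h : τ i = τ j) : τ ∘ swap i j = τ := by
  rw [comp_swap_eq_update, h, Function.update_eq_self, ← h, Function.update_eq_self]

def insertPerm (i : Fin (n + 1)) (t : Perm (Fin n)) : Perm (Fin (n + 1)) :=
  i.cycleRange.symm * Perm.decomposeFin.symm (0, t)

lemma insertPerm_apply_zero (i : Fin (n + 1)) (t : Perm (Fin n)) : insertPerm i t 0 = i := by
  simp [insertPerm]

lemma insertPerm_apply_succ (i : Fin (n + 1)) (t : Perm (Fin n)) (x : Fin n) :
    insertPerm i t x.succ = i.succAbove (t x) := by
  simp [insertPerm]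

lemma sign_insertPerm (i : Fin (n + 1)) (t : Perm (Fin n)) :
    Perm.sign (insertPerm i t) = (-1) ^ (i : ℕ) * Perm.sign t := by
  simp [insertPerm, Fin.sign_cycleRange]

lemma insertPerm_bijective : Function.Bijective (Function.uncurry (insertPerm (n := n))) := by
  rw [Fintype.bijective_iff_injective_and_card]
  refine ⟨fun ⟨i, t⟩ ⟨i', t'⟩ h => ?_, by simp [Fintype.card_perm, Nat.factorial_succ]⟩
  have hi : i = i' := by simpa [insertPerm_apply_zero] using congr($h 0)
  subst hi
  have ht : t = t' := Equiv.ext fun x => Fin.succAbove_right_injective (p := i) <| by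
    simpa [insertPerm_apply_succ] using congr($h x.succ)
  rw [ht]

end Permutations

section Chains

variable {n : ℕ}

lemma le_tbar_iff {τ : Fin (n + 1) → U} {i : Fin (n + 1)} {X : U} :
    X ≤ tbar τ i ↔ ∀ j, i ≤ j → X ≤ τ j := by
  change X ≤ tbarF τ i ↔ _
  exact (Finset.le_inf'_iff _ _).trans (by simp)

lemma tbar_coe (σ : Fin (n + 1) →o U) : tbar ⇑σ = σ := by
  ext i
  refine eq_of_forall_le_iff fun X => ?_
  rw [le_tbar_iff]
  exact ⟨fun h => h i le_rfl, fun h j hij => h.trans (σ.monotone hij)⟩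

lemma tbar_comp_perm_apply (τ : Fin (n + 1) → U) (s : Perm (Fin (n + 1))) {m : Fin (n + 1)}
    (hs : ∀ j, m ≤ s j ↔ m ≤ j) : tbar (τ ∘ s) m = tbar τ m := by
  refine eq_of_forall_le_iff fun X => ?_
  simp only [le_tbar_iff, Function.comp_apply]
  rw [← s.forall_congr_right (q := fun j => m ≤ j → X ≤ τ j)]
  simp only [hs]

lemma le_swap_castSucc_succ_iff (j : Fin (n + 1)) {m : Fin (n + 2)} (hm : m ≠ j.succ)
    (l : Fin (n + 2)) : m ≤ swap j.castSucc j.succ l ↔ m ≤ l := by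
  have hlt : m ≤ j.castSucc ↔ m ≤ j.succ := by
    rw [Fin.le_castSucc_iff]; exact ⟨le_of_lt, fun h => lt_of_le_of_ne h hm⟩
  rcases eq_or_ne l j.castSucc with rfl | h₁
  · rw [swap_apply_left, hlt]
  rcases eq_or_ne l j.succ with rfl | h₂
  · rw [swap_apply_right, hlt]
  · rw [swap_apply_of_ne_of_ne h₁ h₂]

lemma capT_le_tbar {m : ℕ} (τ : Fin (m + 1) → U) (f : Fin (n + 1) → Fin (m + 1))
    (i : Fin (n + 1)) : capT τ ≤ tbar (τ ∘ f) i :=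
  (capT_le_comp τ f).trans ((capT_le_tbar_zero _).trans ((tbar _).monotone (Fin.zero_le i)))

lemma le_faceC_zero (i : Fin (n + 2)) (σ : Fin (n + 2) →o U) : σ 0 ≤ faceC i σ 0 :=
  σ.monotone (Fin.zero_le _)

lemma faceC_succ_tbar_comp_swap (τ : Fin (n + 2) → U) (j : Fin (n + 1)) :
    faceC j.succ (tbar (τ ∘ swap j.castSucc j.succ)) = faceC j.succ (tbar τ) := by
  ext l
  exact tbar_comp_perm_apply τ _ (le_swap_castSucc_succ_iff j (Fin.succAbove_ne j.succ l))

lemma faceC_zero_tbar (τ : Fin (n + 2) → U) : faceC 0 (tbar τ) = tbar (τ ∘ Fin.succ) := by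
  ext l
  refine eq_of_forall_le_iff fun X => ?_
  simp only [faceC, OrderHom.comp_coe, OrderHom.coe_mk, Function.comp_apply, Fin.succAbove_zero,
    le_tbar_iff, Fin.forall_fin_succ, Fin.succ_le_succ_iff]
  simp [Fin.succ_ne_zero]

lemma tbar_comp_perm_degenerate (σ : Fin (n + 1) →o U) {s : Perm (Fin (n + 1))}
    (hs : s ≠ 1) : ∃ i : Fin n, tbar (σ ∘ s) i.castSucc = tbar (σ ∘ s) i.succ := by
  obtain ⟨i, hi⟩ := Perm.exists_apply_succ_le_of_ne_one hs
  refine ⟨i, le_antisymm ((tbar _).monotone (Fin.castSucc_le_succ i)) ?_⟩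
  rw [le_tbar_iff]
  intro j hj
  rcases hj.eq_or_lt with rfl | hj
  · exact (le_tbar_iff.1 le_rfl i.succ le_rfl).trans (σ.monotone hi)
  · exact le_tbar_iff.1 le_rfl j (Fin.castSucc_lt_iff_succ_le.1 hj)

end Chains

section Cochains

omit [Algebra ℚ k]

namespace PreMod

variable {F}

lemma res_res_apply {X Y Z : U} (h₁ : X ≤ Y) (h₂ : Y ≤ Z) (x : F.obj Z) :
    F.res h₁ (F.res h₂ x) = F.res (h₁.trans h₂) x := by
  rw [F.res_trans h₁ h₂]; rfl

lemma res_refl_apply {X : U} (h : X ≤ X) (x : F.obj X) : F.res h x = x := by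
  rw [F.res_refl]; rfl

lemma res_apply_congr {α : Sort*} {g : α → U} (f : ∀ a, F.obj (g a)) {a a' : α} (ha : a = a')
    {X : U} (h : X ≤ g a) : F.res h (f a) = F.res (ha ▸ h) (f a') := by
  subst ha; rfl

end PreMod

variable {p : ℕ}

lemma iota_apply_eq_zero (φ : SimpC F p) {τ : Fin (p + 1) → U} {i j : Fin (p + 1)} (hij : i ≠ j)
    (hτ : τ i = τ j) : iota F p φ τ = 0 := by
  refine Finset.sum_ninvolution (swap i j * ·) (fun s => ?_) (fun s _ => ?_)
    (fun _ => Finset.mem_univ _) (swap_mul_self_mul i j)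
  · have hτs : τ ∘ ⇑(swap i j * s) = τ ∘ s := by
      rw [Perm.coe_mul, ← Function.comp_assoc, comp_swap_of_apply_eq hτ]
    rw [F.res_apply_congr (fun ρ => φ (tbar ρ)) hτs, Perm.sign_mul, Perm.sign_swap hij]
    simp
  · rw [Ne, mul_eq_right, swap_eq_one_iff]
    exact hij

lemma iota_comp_perm (φ : SimpC F p) (τ : Fin (p + 1) → U) (s : Perm (Fin (p + 1))) :
    iota F p φ (τ ∘ s) = (Perm.sign s : ℤ) • F.res (capT_perm τ s).le (iota F p φ τ) := by
  simp only [iota, map_sum, map_zsmul, Finset.smul_sum, smul_smul, F.res_res_apply]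
  refine Fintype.sum_bijective (s * ·) (Group.mulLeft_bijective s) _ _ fun t => ?_
  have hsign : (Perm.sign t : ℤ) = Perm.sign s * Perm.sign (s * t) := by
    rw [Perm.sign_mul, Units.val_mul, ← mul_assoc, ← Units.val_mul, Int.units_mul_self,
      Units.val_one, one_mul]
  rw [← hsign]
  rfl

lemma isAlt_iota (φ : SimpC F p) : IsAlt F (iota F p φ) :=
  ⟨fun _ ⟨_, _, hij, hτ⟩ => iota_apply_eq_zero F φ hij hτ, iota_comp_perm F φ⟩

lemma isRed_pi {ψ : CechC F p} (hψ : IsAlt F ψ) : IsRed F (pi F p ψ) := by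
  rintro σ ⟨i, hi⟩
  simp [pi, hψ.1 _ ⟨i.castSucc, i.succ, Fin.castSucc_lt_succ.ne, hi⟩]

lemma pi_dCech (ψ : CechC F p) : pi F (p + 1) (dCech F p ψ) = dSimp F p (pi F p ψ) := by
  funext σ
  simp only [pi, dCech, dSimp, map_sum, map_zsmul]
  refine Finset.sum_congr rfl fun i _ => congrArg _ ?_
  exact (F.res_res_apply _ _ _).trans (F.res_res_apply _ _ _).symm

lemma pi_iota {φ : SimpC F p} (hφ : IsRed F φ) : pi F p (iota F p φ) = φ := by
  funext σ
  simp only [pi, iota, map_sum, map_zsmul, F.res_res_apply]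
  rw [Finset.sum_eq_single 1 (fun s _ hs => by simp [hφ _ (tbar_comp_perm_degenerate σ hs)])
    (fun h => absurd (Finset.mem_univ _) h)]
  rw [Perm.sign_one, Units.val_one, one_smul]
  exact (F.res_apply_congr (fun ρ => φ ρ) (tbar_coe σ) _).trans (F.res_refl_apply _ _)

-- Restricts along `σ 0 ≤ (∂ᵢσ) 0` rather than the definitionally equal `σ 0 ≤ σ (succAbove i 0)`,
-- so that rewriting under the sum stays type-correct.
lemma dSimp_apply (φ : SimpC F p) (σ : Fin (p + 2) →o U) :
    dSimp F p φ σ =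
      ∑ i : Fin (p + 2), ((-1 : ℤ) ^ (i : ℕ)) • F.res (le_faceC_zero i σ) (φ (faceC i σ)) :=
  rfl

lemma sum_sign_smul_faceC_succ_eq_zero (φ : SimpC F p) (τ : Fin (p + 2) → U) (j : Fin (p + 1)) :
    ∑ s : Perm (Fin (p + 2)), (Perm.sign s : ℤ) •
      F.res ((capT_le_tbar τ s 0).trans (le_faceC_zero j.succ _))
        (φ (faceC j.succ (tbar (τ ∘ s)))) = 0 := by
  refine Finset.sum_ninvolution (· * swap j.castSucc j.succ) (fun s => ?_) (fun s _ => ?_)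
    (fun _ => Finset.mem_univ _) (mul_swap_mul_self _ _)
  · have hface : faceC j.succ (tbar (τ ∘ ⇑(s * swap j.castSucc j.succ))) =
        faceC j.succ (tbar (τ ∘ s)) :=
      faceC_succ_tbar_comp_swap (τ ∘ s) j
    have hsign : (Perm.sign (s * swap j.castSucc j.succ) : ℤ) = -Perm.sign s := by
      simp [Perm.sign_mul, Perm.sign_swap Fin.castSucc_lt_succ.ne]
    rw [hsign, neg_smul, add_neg_eq_zero]
    exact congrArg _ (F.res_apply_congr (fun σ => φ σ) hface.symm _)
  · rw [Ne, mul_eq_left, swap_eq_one_iff]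
    exact Fin.castSucc_lt_succ.ne

lemma iota_dSimp_apply (φ : SimpC F p) (τ : Fin (p + 2) → U) :
    iota F (p + 1) (dSimp F p φ) τ = ∑ s : Perm (Fin (p + 2)), (Perm.sign s : ℤ) •
      F.res (capT_le_tbar τ (s ∘ Fin.succ) 0) (φ (tbar (τ ∘ s ∘ Fin.succ))) := by
  simp only [iota, dSimp_apply, map_sum, map_zsmul, Finset.smul_sum, F.res_res_apply]
  rw [Finset.sum_comm, Fin.sum_univ_succ, Finset.sum_eq_zero fun (j : Fin (p + 1)) _ => ?_,
    add_zero]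
  · refine Finset.sum_congr rfl fun s _ => ?_
    rw [Fin.val_zero, pow_zero, one_smul]
    exact congrArg _ (F.res_apply_congr (fun σ => φ σ) (faceC_zero_tbar (τ ∘ s)) _)
  · rw [Finset.sum_congr rfl fun s _ => smul_comm _ _ _, ← Finset.smul_sum,
      sum_sign_smul_faceC_succ_eq_zero, smul_zero]

lemma dCech_iota_apply (φ : SimpC F p) (τ : Fin (p + 2) → U) :
    dCech F p (iota F p φ) τ = ∑ s : Perm (Fin (p + 2)), (Perm.sign s : ℤ) •
      F.res (capT_le_tbar τ (s ∘ Fin.succ) 0) (φ (tbar (τ ∘ s ∘ Fin.succ))) := by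
  simp only [dCech, iota, map_sum, map_zsmul, Finset.smul_sum, smul_smul, F.res_res_apply]
  rw [← Fintype.sum_prod_type']
  refine Fintype.sum_bijective _ insertPerm_bijective _ _ fun ⟨i, t⟩ => ?_
  have hτ : (τ ∘ i.succAbove) ∘ t = τ ∘ insertPerm i t ∘ Fin.succ :=
    funext fun x => by simp [insertPerm_apply_succ]
  rw [F.res_apply_congr (fun ρ => φ (tbar ρ)) hτ, Function.uncurry_apply_pair, sign_insertPerm]
  push_cast
  rfl

lemma iota_dSimp (φ : SimpC F p) : iota F (p + 1) (dSimp F p φ) = dCech F p (iota F p φ) :=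
  funext fun τ => (iota_dSimp_apply F φ τ).trans (dCech_iota_apply F φ τ).symm

end Cochains

/-- `ι` and `π` are well defined on the reduced simplicial and alternating Čech complexes,
they are morphisms of complexes, and `π ∘ ι = id` on the reduced simplicial complex. -/
theorem iota_pi_chain_maps (p : ℕ) :
    -- `ι` takes reduced cochains to alternating cochains:
    (∀ φ : SimpC F p, IsRed F φ → IsAlt F (iota F p φ)) ∧
    -- `π` takes alternating cochains to reduced cochains:
    (∀ ψ : CechC F p, IsAlt F ψ → IsRed F (pi F p ψ)) ∧
    -- `ι ∘ d_simp = d_Čech ∘ ι`: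
    (∀ φ : SimpC F p, IsRed F φ → iota F (p + 1) (dSimp F p φ) = dCech F p (iota F p φ)) ∧
    -- `π ∘ d_Čech = d_simp ∘ π`:
    (∀ ψ : CechC F p, IsAlt F ψ → pi F (p + 1) (dCech F p ψ) = dSimp F p (pi F p ψ)) ∧
    -- `π ∘ ι = id`:
    (∀ φ : SimpC F p, IsRed F φ → pi F p (iota F p φ) = φ) :=
  ⟨fun φ _ => isAlt_iota F φ, fun _ hψ => isRed_pi F hψ, fun φ _ => iota_dSimp F φ,
    fun ψ _ => pi_dCech F ψ, fun _ hφ => pi_iota F hφ⟩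

end Stmt18
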